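/- Let L > 0 and let ρ : [0,L] → ℝ be continuously differentiable with ρ(x) > 0 for all x ∈ [0,L], and suppose there exists x₀ ∈ [0,L] with ρ(x₀) = ρ̄. Then for every x ∈ [0,L], |Ψ(ρ(x))| ≤ (∫₀^L G(ρ(y)) dy)^{1/2} · (∫₀^L ρ(y)·((d/dy)(1/ρ(y)))² dy)^{1/2}. -/

import Mathlib

/-- The relative pressure potential `G(ρ) = ρ ∫_{ρ̄}^{ρ} s⁻²(p(s) - p̄) ds`
    with `p(s) = a s^γ`. -/
noncomputable def Gfun (a γ ρb ρ : ℝ) : ℝ :=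
  ρ * ∫ s in ρb..ρ, (a * s ^ γ - a * ρb ^ γ) / s ^ 2

/-- Kanel''s function `Ψ(ρ) = ∫_{ρ̄}^{ρ} √(G(s)) / s^{3/2} ds`. -/
noncomputable def PsiFun (a γ ρb ρ : ℝ) : ℝ :=
  ∫ s in ρb..ρ, Real.sqrt (Gfun a γ ρb s) / s ^ ((3 : ℝ) / 2)

/-!
Since `ρ(x₀) = ρ̄`, the substitution `s = ρ(y)` gives
`Ψ(ρ(x)) = ∫_{x₀}^{x} √(G(ρ)) · ρ' / ρ^{3/2} dy`. Bound its absolute value by the integral over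
all of `[0, L]` and apply Cauchy–Schwarz to the factors `√(G(ρ))` and `|ρ'| / ρ^{3/2}`; the square
of the latter is `ρ'² / ρ³ = ρ · ((1/ρ)')²`.
-/

open MeasureTheory intervalIntegral Set Real

section Analysis

variable {a b : ℝ}

theorem intervalIntegral.integral_mul_le_sqrt_mul_sqrt {u v : ℝ → ℝ} (hab : a ≤ b)
    (hu : ContinuousOn u (Icc a b)) (hv : ContinuousOn v (Icc a b)) :
    ∫ y in a..b, u y * v y ≤ √(∫ y in a..b, u y ^ 2) * √(∫ y in a..b, v y ^ 2) := by
  set A := ∫ y in a..b, u y ^ 2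
  set B := ∫ y in a..b, u y * v y
  set C := ∫ y in a..b, v y ^ 2
  have hint : ∀ w : ℝ → ℝ, ContinuousOn w (Icc a b) → IntervalIntegrable w volume a b :=
    fun w hw => hw.intervalIntegrable_of_Icc hab
  -- `t ↦ ∫ (t u - v)²` is a nonnegative quadratic, so its discriminant is nonpositive.
  have hquad : ∀ t : ℝ, 0 ≤ A * (t * t) + -(2 * B) * t + C := by
    intro t
    have hexpand : ∫ y in a..b, (t * u y - v y) ^ 2 = A * (t * t) + -(2 * B) * t + C := by
      have hpt : ∀ y, (t * u y - v y) ^ 2 = t ^ 2 * u y ^ 2 - 2 * t * (u y * v y) + v y ^ 2 :=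
        fun y => by ring
      simp_rw [hpt]
      rw [integral_add, integral_sub, integral_const_mul, integral_const_mul]
      · ring
      all_goals exact hint _ (by fun_prop)
    rw [← hexpand]
    exact integral_nonneg hab fun y _ => sq_nonneg _
  have hdisc := discrim_le_zero hquad
  rw [discrim] at hdisc
  have hA : 0 ≤ A := integral_nonneg hab fun y _ => sq_nonneg _
  calc B ≤ |B| := le_abs_self B
    _ ≤ √(A * C) := abs_le_sqrt (by nlinarith)
    _ = √A * √C := sqrt_mul hA C

theorem intervalIntegral.integral_sqrt_mul_sqrt_le {f g : ℝ → ℝ} (hab : a ≤ b)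
    (hf : ContinuousOn f (Icc a b)) (hg : ContinuousOn g (Icc a b))
    (hf0 : ∀ y ∈ Icc a b, 0 ≤ f y) (hg0 : ∀ y ∈ Icc a b, 0 ≤ g y) :
    ∫ y in a..b, √(f y) * √(g y) ≤ √(∫ y in a..b, f y) * √(∫ y in a..b, g y) := by
  have hsq : ∀ h : ℝ → ℝ, (∀ y ∈ Icc a b, 0 ≤ h y) →
      ∫ y in a..b, √(h y) ^ 2 = ∫ y in a..b, h y := fun h h0 =>
    integral_congr fun y hy => sq_sqrt (h0 y (uIcc_of_le hab ▸ hy))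
  rw [← hsq f hf0, ← hsq g hg0]
  exact integral_mul_le_sqrt_mul_sqrt hab hf.sqrt hg.sqrt

theorem intervalIntegral.norm_integral_le_integral_norm_of_mem_Icc {E : Type*}
    [NormedAddCommGroup E] [NormedSpace ℝ E] {f : ℝ → E} {x₀ x : ℝ}
    (hf : IntervalIntegrable f volume a b) (hx₀ : x₀ ∈ Icc a b) (hx : x ∈ Icc a b) :
    ‖∫ y in x₀..x, f y‖ ≤ ∫ y in a..b, ‖f y‖ := by
  have hab : a ≤ b := hx.1.trans hx.2
  have hsub : uIoc x₀ x ⊆ Ioc a b :=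
    Ioc_subset_Ioc (le_min hx₀.1 hx.1) (max_le hx₀.2 hx.2)
  calc ‖∫ y in x₀..x, f y‖ ≤ ∫ y in uIoc x₀ x, ‖f y‖ := norm_integral_le_integral_norm_uIoc
    _ ≤ ∫ y in Ioc a b, ‖f y‖ :=
      setIntegral_mono_set hf.1.norm
        (ae_of_all _ fun y => norm_nonneg _) hsub.eventuallyLE
    _ = ∫ y in a..b, ‖f y‖ := (integral_of_le hab).symm

variable {ρ : ℝ → ℝ}

theorem hasDerivAt_derivWithin_Icc (hρ : DifferentiableOn ℝ ρ (Icc a b)) {y : ℝ}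
    (hy : y ∈ Ioo a b) : HasDerivAt ρ (derivWithin ρ (Icc a b) y) y := by
  have hmem : Icc a b ∈ nhds y := Icc_mem_nhds hy.1 hy.2
  rw [derivWithin_of_mem_nhds hmem]
  exact ((hρ y (Ioo_subset_Icc_self hy)).differentiableAt hmem).hasDerivAt

theorem integral_comp_mul_derivWithin_Icc {g : ℝ → ℝ} {x₀ x : ℝ} (hab : a < b)
    (hρ : ContDiffOn ℝ 1 ρ (Icc a b)) (hg : ContinuousOn g (ρ '' Icc a b))
    (hx₀ : x₀ ∈ Icc a b) (hx : x ∈ Icc a b) :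
    ∫ y in x₀..x, g (ρ y) * derivWithin ρ (Icc a b) y = ∫ s in ρ x₀..ρ x, g s := by
  have hsub : uIcc x₀ x ⊆ Icc a b := uIcc_subset_Icc hx₀ hx
  refine integral_comp_mul_deriv'' (hρ.continuousOn.mono hsub) (fun y hy => ?_)
    ((hρ.continuousOn_derivWithin (uniqueDiffOn_Icc hab) le_rfl).mono hsub)
    (hg.mono (image_mono hsub))
  have hy' : y ∈ Ioo a b :=
    Ioo_subset_Ioo (le_min hx₀.1 hx.1) (max_le hx₀.2 hx.2) hy
  exact (hasDerivAt_derivWithin_Icc (hρ.differentiableOn one_ne_zero) hy').hasDerivWithinAt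

theorem integral_mul_deriv_inv_sq (hab : a ≤ b) (hρ : DifferentiableOn ℝ ρ (Icc a b))
    (hρ0 : ∀ y ∈ Ioo a b, ρ y ≠ 0) :
    ∫ y in a..b, ρ y * deriv (fun z => 1 / ρ z) y ^ 2 =
      ∫ y in a..b, derivWithin ρ (Icc a b) y ^ 2 / ρ y ^ 3 := by
  refine integral_congr_Ioo_of_le hab fun y hy => ?_
  have hinv := (hasDerivAt_derivWithin_Icc hρ hy).fun_inv (hρ0 y hy)
  simp only [one_div]
  rw [hinv.deriv]
  field_simp [hρ0 y hy]

end Analysis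

section Kanel

variable {a γ ρb : ℝ}

theorem Gfun_nonneg (ha : 0 ≤ a) (hγ : 0 ≤ γ) (hρb : 0 < ρb) {ρ : ℝ} (hρ : 0 < ρ) :
    0 ≤ Gfun a γ ρb ρ := by
  -- The integrand `a (s^γ - ρ̄^γ) / s²` has the sign of `s - ρ̄`.
  refine mul_nonneg hρ.le ?_
  rcases le_total ρb ρ with h | h
  · refine integral_nonneg h fun s hs => div_nonneg (sub_nonneg.2 ?_) (sq_nonneg s)
    exact mul_le_mul_of_nonneg_left (rpow_le_rpow hρb.le hs.1 hγ) ha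
  · rw [integral_symm, ← intervalIntegral.integral_neg]
    refine integral_nonneg h fun s hs => neg_nonneg.2 (div_nonpos_of_nonpos_of_nonneg
      (sub_nonpos.2 ?_) (sq_nonneg s))
    exact mul_le_mul_of_nonneg_left (rpow_le_rpow (hρ.trans_le hs.1).le hs.2 hγ) ha

theorem continuousOn_Gfun (hρb : 0 < ρb) : ContinuousOn (Gfun a γ ρb) (Ioi 0) := by
  have hf : ContinuousOn (fun s : ℝ => (a * s ^ γ - a * ρb ^ γ) / s ^ 2) (Ioi 0) := by
    fun_prop (disch := intro s hs; have : (0 : ℝ) < s := hs; positivity)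
  refine continuousOn_id.mul (continuousOn_of_forall_continuousAt fun r hr => ?_)
  have hsub : uIcc ρb r ⊆ Ioi 0 := fun s hs => (lt_min hρb hr).trans_le hs.1
  exact (integral_hasDerivAt_right (hf.mono hsub).intervalIntegrable
    (hf.stronglyMeasurableAtFilter isOpen_Ioi r hr)
    (hf.continuousAt (isOpen_Ioi.mem_nhds hr))).continuousAt

theorem continuousOn_sqrt_Gfun_div_rpow (hρb : 0 < ρb) :
    ContinuousOn (fun s => √(Gfun a γ ρb s) / s ^ ((3 : ℝ) / 2)) (Ioi 0) :=
  (continuousOn_Gfun hρb).sqrt.div (continuousOn_id.rpow_const fun _ hs => Or.inl (ne_of_gt hs))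
    fun _ hs => (rpow_pos_of_pos hs _).ne'

theorem abs_sqrt_div_rpow_mul_eq {g r : ℝ} (d : ℝ) (hr : 0 < r) :
    |√g / r ^ ((3 : ℝ) / 2) * d| = √g * √(d ^ 2 / r ^ 3) := by
  have hr32 : √(r ^ 3) = r ^ ((3 : ℝ) / 2) := by
    rw [sqrt_eq_rpow, ← rpow_natCast, ← rpow_mul hr.le]
    norm_num
  rw [sqrt_div (sq_nonneg d), sqrt_sq_eq_abs, hr32, abs_mul,
    abs_of_nonneg (by positivity : 0 ≤ √g / r ^ ((3 : ℝ) / 2))]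
  ring

theorem abs_PsiFun_comp_le {L : ℝ} {ρ : ℝ → ℝ} (hρb : 0 < ρb) (hL : 0 < L)
    (hρ : ContDiffOn ℝ 1 ρ (Icc 0 L)) (hpos : ∀ x ∈ Icc (0 : ℝ) L, 0 < ρ x) {x₀ x : ℝ}
    (hx₀ : x₀ ∈ Icc 0 L) (hρx₀ : ρ x₀ = ρb) (hx : x ∈ Icc 0 L) :
    |PsiFun a γ ρb (ρ x)| ≤
      ∫ y in (0 : ℝ)..L, √(Gfun a γ ρb (ρ y)) * √(derivWithin ρ (Icc 0 L) y ^ 2 / ρ y ^ 3) := by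
  set ρ' := derivWithin ρ (Icc 0 L)
  have hmaps : MapsTo ρ (Icc 0 L) (Ioi 0) := hpos
  have hφ := continuousOn_sqrt_Gfun_div_rpow (a := a) (γ := γ) hρb
  have hsubst := integral_comp_mul_derivWithin_Icc hL hρ (hφ.mono hmaps.image_subset) hx₀ hx
  have hint : IntervalIntegrable
      (fun y => √(Gfun a γ ρb (ρ y)) / ρ y ^ ((3 : ℝ) / 2) * ρ' y) volume 0 L :=
    ((hφ.comp hρ.continuousOn hmaps).mul
      (hρ.continuousOn_derivWithin (uniqueDiffOn_Icc hL) le_rfl)).intervalIntegrable_of_Icc hL.le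
  calc |PsiFun a γ ρb (ρ x)|
      = ‖∫ y in x₀..x, √(Gfun a γ ρb (ρ y)) / ρ y ^ ((3 : ℝ) / 2) * ρ' y‖ := by
        rw [hsubst, hρx₀, PsiFun, norm_eq_abs]
    _ ≤ ∫ y in (0 : ℝ)..L, ‖√(Gfun a γ ρb (ρ y)) / ρ y ^ ((3 : ℝ) / 2) * ρ' y‖ :=
        norm_integral_le_integral_norm_of_mem_Icc hint hx₀ hx
    _ = _ := integral_congr fun y hy =>
        (norm_eq_abs _).trans (abs_sqrt_div_rpow_mul_eq _ (hpos y (uIcc_of_le hL.le ▸ hy)))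

end Kanel

theorem abs_PsiFun_le_energy_bound (a γ ρb : ℝ)
    (ha : 0 < a) (hγ : 1 ≤ γ) (hρb : 0 < ρb)
    (L : ℝ) (hL : 0 < L) (ρ : ℝ → ℝ)
    (hρ : ContDiffOn ℝ 1 ρ (Set.Icc 0 L))
    (hpos : ∀ x ∈ Set.Icc (0 : ℝ) L, 0 < ρ x)
    (hx₀ : ∃ x₀ ∈ Set.Icc (0 : ℝ) L, ρ x₀ = ρb) :
    ∀ x ∈ Set.Icc (0 : ℝ) L,
      |PsiFun a γ ρb (ρ x)| ≤
        Real.sqrt (∫ y in (0 : ℝ)..L, Gfun a γ ρb (ρ y)) *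
          Real.sqrt (∫ y in (0 : ℝ)..L, ρ y * (deriv (fun z => 1 / ρ z) y) ^ 2) := by
  intro x hx
  obtain ⟨x₀, hx₀, hρx₀⟩ := hx₀
  have hρc : ContinuousOn ρ (Icc 0 L) := hρ.continuousOn
  have hρ'c : ContinuousOn (derivWithin ρ (Icc 0 L)) (Icc 0 L) :=
    hρ.continuousOn_derivWithin (uniqueDiffOn_Icc hL) le_rfl
  rw [integral_mul_deriv_inv_sq hL.le (hρ.differentiableOn one_ne_zero)
    fun y hy => (hpos y (Ioo_subset_Icc_self hy)).ne']
  calc |PsiFun a γ ρb (ρ x)|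
      ≤ ∫ y in (0 : ℝ)..L, √(Gfun a γ ρb (ρ y)) * √(derivWithin ρ (Icc 0 L) y ^ 2 / ρ y ^ 3) :=
        abs_PsiFun_comp_le hρb hL hρ hpos hx₀ hρx₀ hx
    _ ≤ _ := integral_sqrt_mul_sqrt_le hL.le ((continuousOn_Gfun hρb).comp hρc hpos)
        ((hρ'c.pow 2).div (hρc.pow 3) fun y hy => pow_ne_zero 3 (hpos y hy).ne')
        (fun y hy => Gfun_nonneg ha.le (zero_le_one.trans hγ) hρb (hpos y hy))
        (fun y hy => div_nonneg (sq_nonneg _) (pow_pos (hpos y hy) 3).le)
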